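/- Assume Γ is a tree with at least two vertices and T = Γ. Then UD^nΓ has exactly one critical 0-cell, namely the set of the n vertices at distances 0, 1, …, n−1 from ∗ in Γ (these vertices lie on a single geodesic segment starting at ∗, since Γ is sufficiently subdivided for n). -/

import Mathlib

open SimpleGraph

attribute [local instance] Classical.propDecidable

namespace GraphBraid

/-- The degree of a vertex, defined via `Set.ncard` to avoid decidability assumptions. -/
noncomputable def ncdeg {V : Type} (H : SimpleGraph V) (v : V) : ℕ := (H.neighborSet v).ncard

/-- The basic setup: a finite connected simple graph `G` with a spanning tree `T`,
a root `root` of degree one in `T`, and a labelling of the edges of `T` incident to each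
vertex `u` by the numbers `0, …, d_T(u) - 1`, where the edge towards the root receives the
label `0` (and the unique edge at the root receives the label `1`). -/
structure Setup (V : Type) [Fintype V] [DecidableEq V] where
  G : SimpleGraph V
  G_conn : G.Connected
  T : SimpleGraph V
  T_le : T ≤ G
  T_tree : T.IsTree
  root : V
  root_deg : ncdeg T root = 1
  label : V → V → ℕ
  label_bij : ∀ u : V, u ≠ root → Set.BijOn (label u) (T.neighborSet u) (Set.Iio (ncdeg T u))
  label_zero : ∀ u : V, u ≠ root → ∀ w : V, T.Adj u w →
    (label u w = 0 ↔ T.dist root w + 1 = T.dist root u)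
  label_root : ∀ w : V, T.Adj root w → label root w = 1

namespace Setup

variable {V : Type} [Fintype V] [DecidableEq V] (S : Setup V)

/-- The unique geodesic (path) in the tree `T` from `u` to `w`. -/
noncomputable def geod (u w : V) : S.T.Walk u w := (S.T_tree.existsUnique_path u w).choose

/-- `g(u,w)`: the label at `u` of the first edge of the tree geodesic from `u` to `w`,
with `g(u,u) = 0`. -/
noncomputable def gfun (u w : V) : ℕ :=
  if u = w then 0 else S.label u ((S.geod u w).getVert 1)

lemma exists_wedge (u w : V) :
    ∃ x : V, (x ∈ (S.geod S.root u).support ∧ x ∈ (S.geod S.root w).support) ∧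
      ∀ y : V, y ∈ (S.geod S.root u).support → y ∈ (S.geod S.root w).support →
        S.T.dist S.root y ≤ S.T.dist S.root x := by
  classical
  have hne : ((S.geod S.root u).support.toFinset ∩
      (S.geod S.root w).support.toFinset).Nonempty :=
    ⟨S.root, by simp [SimpleGraph.Walk.start_mem_support]⟩
  obtain ⟨x, hx, hmax⟩ := Finset.exists_max_image _ (fun y => S.T.dist S.root y) hne
  simp only [Finset.mem_inter, List.mem_toFinset] at hx hmax
  exact ⟨x, ⟨hx.1, hx.2⟩, fun y h1 h2 => hmax y ⟨h1, h2⟩⟩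

/-- `u ∧ w`: the vertex farthest from the root lying on both tree geodesics from the
root to `u` and from the root to `w`. -/
noncomputable def wedge (u w : V) : V := (S.exists_wedge u w).choose

/-- The order on vertices: `u ≤ w` iff `u ∧ w = u`, or `u ∧ w ≠ u` and
`g(u ∧ w, u) < g(u ∧ w, w)`. -/
def vle (u w : V) : Prop :=
  S.wedge u w = u ∨ (S.wedge u w ≠ u ∧ S.gfun (S.wedge u w) u < S.gfun (S.wedge u w) w)

/-- The associated strict order on vertices. -/
def vlt (u w : V) : Prop := S.vle u w ∧ u ≠ w

/-- `ι(e)`: the larger endpoint of the edge `e` in the vertex order. -/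
noncomputable def iota (e : Sym2 V) : V :=
  if S.vle (Quot.out e).1 (Quot.out e).2 then (Quot.out e).2 else (Quot.out e).1

/-- `τ(e)`: the smaller endpoint of the edge `e` in the vertex order. -/
noncomputable def tau (e : Sym2 V) : V :=
  if S.vle (Quot.out e).1 (Quot.out e).2 then (Quot.out e).1 else (Quot.out e).2

/-- `e(v)`: the edge of `T` incident to `v` lying on the tree geodesic from `v` to the root. -/
noncomputable def eV (v : V) : Sym2 V := s(v, (S.geod v S.root).getVert 1)

/-- A cell of `UD^n Γ`: an `n`-element set whose elements are vertices (encoded as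
diagonal elements of `Sym2 V`) and closed edges of `G`, no two distinct elements of which
share a vertex. -/
def IsCell (n : ℕ) (c : Finset (Sym2 V)) : Prop :=
  c.card = n ∧ (∀ s ∈ c, s.IsDiag ∨ s ∈ S.G.edgeSet) ∧
    ∀ s ∈ c, ∀ t ∈ c, s ≠ t → ∀ x : V, x ∈ s → x ∉ t

/-- The dimension of a cell: the number of edges it contains. -/
noncomputable def dim (c : Finset (Sym2 V)) : ℕ := (c.filter (fun s => ¬ s.IsDiag)).card

/-- A vertex `v` is blocked in `c` if `v` is the root, or `e(v)` shares a vertex with some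
element of `c` other than `v`. -/
def Blocked (c : Finset (Sym2 V)) (v : V) : Prop :=
  v = S.root ∨ ∃ s ∈ c, s ≠ Sym2.diag v ∧ ∃ x : V, x ∈ S.eV v ∧ x ∈ s

/-- A vertex `v` is unblocked in `c` if it belongs to `c` and is not blocked. -/
def Unblocked (c : Finset (Sym2 V)) (v : V) : Prop := Sym2.diag v ∈ c ∧ ¬ S.Blocked c v

/-- The elementary reduction of `c` from the vertex `v`: replace `v` by the edge `e(v)`. -/
noncomputable def redFrom (c : Finset (Sym2 V)) (v : V) : Finset (Sym2 V) :=
  insert (S.eV v) (c.erase (Sym2.diag v))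

/-- `c'` is the principal elementary reduction of `c`: it is the elementary reduction of `c`
from the smallest unblocked vertex of `c`. -/
def PrincipalRedOf (c c' : Finset (Sym2 V)) : Prop :=
  ∃ v : V, S.Unblocked c v ∧ (∀ u : V, S.Unblocked c u → S.vle v u) ∧ c' = S.redFrom c v

/-- Auxiliary definition of redundancy, by induction on the dimension: a cell of
dimension `i` is redundant iff it has an unblocked vertex and it is not the principal
elementary reduction of a redundant cell of dimension `i - 1`. -/
def RedundantAux (n : ℕ) : ℕ → Finset (Sym2 V) → Prop
  | 0, c => ∃ v, S.Unblocked c v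
  | (i + 1), c => (∃ v, S.Unblocked c v) ∧
      ¬ ∃ c₀, S.IsCell n c₀ ∧ dim c₀ = i ∧ RedundantAux n i c₀ ∧ S.PrincipalRedOf c₀ c

/-- A cell is redundant if the discrete vector field `W` is defined on it. -/
def Redundant (n : ℕ) (c : Finset (Sym2 V)) : Prop := S.RedundantAux n (dim c) c

/-- A cell is collapsible if it lies in the image of `W`. -/
def Collapsible (n : ℕ) (c : Finset (Sym2 V)) : Prop :=
  ∃ c₀, S.IsCell n c₀ ∧ S.Redundant n c₀ ∧ S.PrincipalRedOf c₀ c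

/-- A cell is critical if it is neither redundant nor collapsible. -/
def Critical (n : ℕ) (c : Finset (Sym2 V)) : Prop :=
  ¬ S.Redundant n c ∧ ¬ S.Collapsible n c

/-- An edge `e` of the cell `c` is order-respecting in `c` if `e` lies in `T` and every
vertex `v ∈ c` such that `e(v)` and `e` share the vertex `τ(e)` satisfies `v > ι(e)`. -/
def OrderResp (c : Finset (Sym2 V)) (e : Sym2 V) : Prop :=
  e ∈ c ∧ e ∈ S.T.edgeSet ∧
    ∀ v : V, v ≠ S.root → Sym2.diag v ∈ c → S.tau e ∈ S.eV v → S.vlt (S.iota e) v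

/-- `e` is the minimal order-respecting edge of `c`. -/
def MinOrderResp (c : Finset (Sym2 V)) (e : Sym2 V) : Prop :=
  S.OrderResp c e ∧ ∀ e' : Sym2 V, S.OrderResp c e' → S.vle (S.iota e) (S.iota e')

/-- `c'` is a face of `c` obtained by replacing one edge of `c` by one of its endpoints. -/
def IsFace (c' c : Finset (Sym2 V)) : Prop :=
  ∃ (e : Sym2 V) (x : V), e ∈ c ∧ ¬ e.IsDiag ∧ x ∈ e ∧ c' = insert (Sym2.diag x) (c.erase e)

/-- `Γ` is sufficiently subdivided for `n`: every path between distinct vertices of degree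
`≠ 2` passes through at least `n - 1` edges, and every cycle has length at least `n + 1`. -/
def SuffSubdiv (n : ℕ) : Prop :=
  (∀ u v : V, u ≠ v → ncdeg S.G u ≠ 2 → ncdeg S.G v ≠ 2 →
    ∀ p : S.G.Walk u v, p.IsPath → n - 1 ≤ p.length) ∧
  (∀ v : V, ∀ p : S.G.Walk v v, p.IsCycle → n + 1 ≤ p.length)

end Setup
namespace Setup

variable {V : Type} [Fintype V] [DecidableEq V] (S : Setup V)

lemma geod_isPath (u w : V) : (S.geod u w).IsPath :=
  (S.T_tree.existsUnique_path u w).choose_spec.1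

lemma geod_unique {u w : V} (p : S.T.Walk u w) (hp : p.IsPath) : p = S.geod u w :=
  (S.T_tree.existsUnique_path u w).choose_spec.2 p hp

lemma geod_length (u w : V) : (S.geod u w).length = S.T.dist u w := by
  refine le_antisymm ?_ (SimpleGraph.dist_le _)
  obtain ⟨p, hp⟩ := (S.T_tree.isConnected.preconnected u w).exists_walk_length_eq_dist
  calc (S.geod u w).length = p.bypass.length := by
        rw [S.geod_unique p.bypass p.bypass_isPath]
    _ ≤ p.length := p.length_bypass_le
    _ = S.T.dist u w := hp

lemma dist_getVert {a b : V} (p : S.T.Walk a b) :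
    p.length = S.T.dist a b → ∀ i, i ≤ p.length →
      S.T.dist a (p.getVert i) = i ∧ S.T.dist (p.getVert i) b = p.length - i := by
  induction p with
  | nil =>
      intro _ i hi
      simp only [SimpleGraph.Walk.length_nil, Nat.le_zero] at hi
      subst hi
      simp [(S.T_tree.isConnected.dist_eq_zero_iff).2 rfl]
  | @cons a a' b h q ih =>
      intro hlen i hi
      simp only [SimpleGraph.Walk.length_cons] at hlen hi ⊢
      have haa' : S.T.dist a a' ≤ 1 := by
        simpa using SimpleGraph.dist_le (SimpleGraph.Walk.cons h SimpleGraph.Walk.nil)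
      have hq : q.length = S.T.dist a' b := by
        have h1 : S.T.dist a' b ≤ q.length := SimpleGraph.dist_le _
        have h2 : S.T.dist a b ≤ S.T.dist a a' + S.T.dist a' b :=
          S.T_tree.isConnected.dist_triangle
        omega
      cases i with
      | zero =>
          simp only [SimpleGraph.Walk.getVert_zero, Nat.sub_zero]
          exact ⟨(S.T_tree.isConnected.dist_eq_zero_iff).2 rfl, by omega⟩
      | succ j =>
          have hj : j ≤ q.length := by omega
          obtain ⟨ih1, ih2⟩ := ih hq j hj
          rw [SimpleGraph.Walk.getVert_cons_succ]
          have hup : S.T.dist a (q.getVert j) ≤ j + 1 := by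
            have := S.T_tree.isConnected.dist_triangle (u := a) (v := a') (w := q.getVert j)
            omega
          have hlow : j + 1 ≤ S.T.dist a (q.getVert j) := by
            have := S.T_tree.isConnected.dist_triangle (u := a) (v := q.getVert j) (w := b)
            omega
          exact ⟨le_antisymm hup hlow, by omega⟩

/-- The parent of a vertex: the next vertex on the geodesic towards the root. -/
noncomputable def par (v : V) : V := (S.geod v S.root).getVert 1

lemma dist_root_pos {v : V} (hv : v ≠ S.root) : 1 ≤ S.T.dist S.root v := by
  have h : S.T.dist S.root v ≠ 0 := fun h =>
    hv ((S.T_tree.isConnected.dist_eq_zero_iff).1 h).symm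
  omega

lemma par_spec {v : V} (hv : v ≠ S.root) :
    S.T.Adj v (S.par v) ∧ S.T.dist S.root (S.par v) + 1 = S.T.dist S.root v := by
  have hlen : (S.geod v S.root).length = S.T.dist v S.root := S.geod_length v S.root
  have hc2 : S.T.dist S.root v = S.T.dist v S.root := SimpleGraph.dist_comm
  have hpos : 1 ≤ S.T.dist v S.root := by rw [← hc2]; exact S.dist_root_pos hv
  constructor
  · have := (S.geod v S.root).adj_getVert_succ (i := 0) (by omega)
    simpa [SimpleGraph.Walk.getVert_zero, par] using this
  · obtain ⟨-, h2⟩ := S.dist_getVert (S.geod v S.root) hlen 1 (by omega)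
    have hc1 : S.T.dist S.root (S.par v) = S.T.dist (S.par v) S.root := SimpleGraph.dist_comm
    have hpar : S.T.dist (S.par v) S.root = S.T.dist ((S.geod v S.root).getVert 1) S.root := rfl
    omega

lemma geod_root_reverse (u : V) : S.geod S.root u = (S.geod u S.root).reverse :=
  (S.geod_unique _ ((S.geod_isPath u S.root).reverse)).symm

lemma mem_geod_root {u x : V} (hx : x ∈ (S.geod S.root u).support) :
    (S.geod S.root u).getVert (S.T.dist S.root x) = x ∧
      S.T.dist S.root x ≤ S.T.dist S.root u := by
  rw [SimpleGraph.Walk.mem_support_iff_exists_getVert] at hx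
  obtain ⟨i, hxi, hi⟩ := hx
  obtain ⟨h1, -⟩ := S.dist_getVert (S.geod S.root u) (S.geod_length _ _) i hi
  rw [hxi] at h1
  subst h1
  refine ⟨hxi, ?_⟩
  rw [← S.geod_length S.root u]
  exact hi

lemma getVert_pred_eq_par {u : V} (hu : u ≠ S.root) :
    (S.geod S.root u).getVert (S.T.dist S.root u - 1) = S.par u := by
  rw [S.geod_root_reverse u, SimpleGraph.Walk.getVert_reverse]
  have hlen : (S.geod u S.root).length = S.T.dist u S.root := S.geod_length u S.root
  have hc2 : S.T.dist S.root u = S.T.dist u S.root := SimpleGraph.dist_comm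
  have hpos : 1 ≤ S.T.dist u S.root := by rw [← hc2]; exact S.dist_root_pos hu
  have h1 : (S.geod u S.root).length - (S.T.dist S.root u - 1) = 1 := by omega
  rw [h1]
  rfl

lemma concat_geod_isPath' {z u : V} (h : S.T.Adj z u)
    (hu : u ∉ (S.geod S.root z).support) :
    ((S.geod S.root z).concat h).IsPath := by
  rw [← SimpleGraph.Walk.isPath_reverse_iff, SimpleGraph.Walk.reverse_concat,
    SimpleGraph.Walk.cons_isPath_iff]
  refine ⟨(S.geod_isPath _ _).reverse, ?_⟩
  rw [SimpleGraph.Walk.support_reverse, List.mem_reverse]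
  exact hu

lemma concat_geod_isPath {z u : V} (h : S.T.Adj z u)
    (hd : S.T.dist S.root z < S.T.dist S.root u) :
    ((S.geod S.root z).concat h).IsPath := by
  refine S.concat_geod_isPath' h fun hmem => ?_
  have := (S.mem_geod_root hmem).2
  omega

lemma par_unique {u z : V} (hu : u ≠ S.root) (hadj : S.T.Adj z u)
    (hd : S.T.dist S.root z + 1 = S.T.dist S.root u) : z = S.par u := by
  have hpath := S.concat_geod_isPath hadj (by omega)
  have heq := S.geod_unique _ hpath
  have hz : z ∈ (S.geod S.root u).support := by
    rw [← heq, SimpleGraph.Walk.support_concat]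
    exact List.mem_append_left _ (SimpleGraph.Walk.end_mem_support _)
  have h1 := (S.mem_geod_root hz).1
  rw [← S.getVert_pred_eq_par hu, ← h1]
  congr 1
  omega

lemma geod_concat {v : V} (hv : v ≠ S.root) :
    S.geod S.root v = (S.geod S.root (S.par v)).concat (S.par_spec hv).1.symm := by
  refine (S.geod_unique _ (S.concat_geod_isPath _ ?_)).symm
  have := (S.par_spec hv).2
  omega

section Levels

variable {S} {n : ℕ}
variable (hsub1 : ∀ u v : V, u ≠ v → ncdeg S.T u ≠ 2 → ncdeg S.T v ≠ 2 →
    ∀ p : S.T.Walk u v, p.IsPath → n - 1 ≤ p.length)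

include hsub1

lemma level_unique :
    ∀ k, k < n → ∀ u v : V, S.T.dist S.root u = k → S.T.dist S.root v = k → u = v := by
  intro k
  induction k with
  | zero =>
      intro _ u v hu hv
      have hu' := (S.T_tree.isConnected.dist_eq_zero_iff).1 hu
      have hv' := (S.T_tree.isConnected.dist_eq_zero_iff).1 hv
      rw [← hu', ← hv']
  | succ k ih =>
      intro hk u v hu hv
      by_contra hne
      have hu0 : u ≠ S.root := by
        intro h; subst h
        rw [(S.T_tree.isConnected.dist_eq_zero_iff).2 rfl] at hu; omega
      have hv0 : v ≠ S.root := by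
        intro h; subst h
        rw [(S.T_tree.isConnected.dist_eq_zero_iff).2 rfl] at hv; omega
      obtain ⟨hua, hud⟩ := S.par_spec hu0
      obtain ⟨hva, hvd⟩ := S.par_spec hv0
      have hpar : S.par u = S.par v := ih (by omega) _ _ (by omega) (by omega)
      set x := S.par u with hxdef
      have hxadj_u : S.T.Adj x u := hua.symm
      have hxadj_v : S.T.Adj x v := by rw [hpar]; exact hva.symm
      have hxd : S.T.dist S.root x = k := by omega
      rcases Nat.eq_zero_or_pos k with hk0 | hkpos
      · have hxr : x = S.root :=
          (S.T_tree.isConnected.dist_eq_zero_iff).1 (by rw [SimpleGraph.dist_comm]; omega)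
        have hsubset : {u, v} ⊆ S.T.neighborSet S.root := by
          intro y hy
          simp only [Set.mem_insert_iff, Set.mem_singleton_iff] at hy
          rcases hy with h | h
          · subst h; rw [← hxr]; exact hxadj_u
          · subst h; rw [← hxr]; exact hxadj_v
        have h2 : ({u, v} : Set V).ncard = 2 := Set.ncard_pair hne
        have hle := Set.ncard_le_ncard hsubset (Set.toFinite _)
        rw [h2] at hle
        have hroot := S.root_deg
        unfold ncdeg at hroot
        omega
      · have hx0 : x ≠ S.root := by
          intro h
          rw [h, (S.T_tree.isConnected.dist_eq_zero_iff).2 rfl] at hxd; omega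
        obtain ⟨hxa, hxdd⟩ := S.par_spec hx0
        have hup : u ≠ S.par x := by intro h; rw [← h] at hxdd; omega
        have hvp : v ≠ S.par x := by intro h; rw [← h] at hxdd; omega
        have hsubset : {u, v, S.par x} ⊆ S.T.neighborSet x := by
          intro y hy
          simp only [Set.mem_insert_iff, Set.mem_singleton_iff] at hy
          rcases hy with h | h | h
          · subst h; exact hxadj_u
          · subst h; exact hxadj_v
          · subst h; exact hxa
        have h3 : ({u, v, S.par x} : Set V).ncard = 3 := by
          rw [Set.ncard_insert_of_notMem (by simp [hne, hup]), Set.ncard_pair hvp]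
        have hge := Set.ncard_le_ncard hsubset (Set.toFinite _)
        rw [h3] at hge
        have hdeg : ncdeg S.T x ≠ 2 := by unfold ncdeg; omega
        have hrootdeg : ncdeg S.T S.root ≠ 2 := by have := S.root_deg; omega
        have hpath := hsub1 S.root x (fun h => hx0 h.symm) hrootdeg hdeg
          (S.geod S.root x) (S.geod_isPath _ _)
        rw [S.geod_length] at hpath
        omega

lemma exists_far (hV : 2 ≤ Fintype.card V) :
    ∃ w : V, n - 1 ≤ S.T.dist S.root w := by
  obtain ⟨w, -, hmax⟩ := Finset.exists_max_image Finset.univ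
    (fun v => S.T.dist S.root v) ⟨S.root, Finset.mem_univ _⟩
  refine ⟨w, ?_⟩
  have hmax' : ∀ v : V, S.T.dist S.root v ≤ S.T.dist S.root w := fun v =>
    hmax v (Finset.mem_univ _)
  have hw0 : w ≠ S.root := by
    obtain ⟨v, hv⟩ := Fintype.exists_ne_of_one_lt_card (by omega) S.root
    have h1 := S.dist_root_pos hv
    have h2 := hmax' v
    intro h; subst h
    rw [(S.T_tree.isConnected.dist_eq_zero_iff).2 rfl] at h2
    omega
  have hnb : S.T.neighborSet w ⊆ {S.par w} := by
    intro z hz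
    have hadj : S.T.Adj w z := hz
    by_cases hmem : z ∈ (S.geod S.root w).support
    · obtain ⟨h1, h2⟩ := S.mem_geod_root hmem
      obtain ⟨-, h3⟩ := S.dist_getVert (S.geod S.root w) (S.geod_length _ _)
        (S.T.dist S.root z) (by rw [S.geod_length]; exact h2)
      rw [h1] at h3
      have hzw1 : S.T.dist z w ≤ 1 := by
        simpa using SimpleGraph.dist_le (SimpleGraph.Walk.cons hadj.symm SimpleGraph.Walk.nil)
      have hzw0 : S.T.dist z w ≠ 0 := fun hh =>
        hadj.ne' ((S.T_tree.isConnected.dist_eq_zero_iff).1 hh)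
      rw [S.geod_length] at h3
      have hdz : S.T.dist S.root z = S.T.dist S.root w - 1 := by omega
      have hp := S.getVert_pred_eq_par hw0
      rw [Set.mem_singleton_iff, ← hp, ← h1, hdz]
    · exfalso
      have hpath := S.concat_geod_isPath' hadj hmem
      have heq := S.geod_unique _ hpath
      have hlen : S.T.dist S.root z = S.T.dist S.root w + 1 := by
        have h1 := S.geod_length S.root z
        rw [← heq, SimpleGraph.Walk.length_concat, S.geod_length] at h1
        omega
      have := hmax' z
      omega
  have hdeg : ncdeg S.T w ≤ 1 := by
    have := Set.ncard_le_ncard hnb (Set.toFinite _)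
    simpa [ncdeg] using this
  have hdeg2 : ncdeg S.T w ≠ 2 := by omega
  have hrootdeg : ncdeg S.T S.root ≠ 2 := by have := S.root_deg; omega
  have hpath := hsub1 S.root w (fun h => hw0 h.symm) hrootdeg hdeg2
    (S.geod S.root w) (S.geod_isPath _ _)
  rw [S.geod_length] at hpath
  exact hpath

lemma exists_level (hV : 2 ≤ Fintype.card V) {k : ℕ} (hk : k < n) :
    ∃ v : V, S.T.dist S.root v = k := by
  obtain ⟨w, hw⟩ := exists_far hsub1 hV
  refine ⟨(S.geod S.root w).getVert k, ?_⟩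
  exact (S.dist_getVert (S.geod S.root w) (S.geod_length _ _) k
    (by rw [S.geod_length]; omega)).1

lemma card_ball (hV : 2 ≤ Fintype.card V) :
    (Finset.univ.filter (fun v : V => S.T.dist S.root v < n)).card = n := by
  have h : (Finset.univ.filter (fun v : V => S.T.dist S.root v < n)).card
      = (Finset.range n).card := by
    refine Finset.card_bij (fun v _ => S.T.dist S.root v) ?_ ?_ ?_
    · intro v hv
      simp only [Finset.mem_filter] at hv
      simpa using hv.2
    · intro u hu v hv h
      simp only [Finset.mem_filter] at hv
      exact level_unique hsub1 _ hv.2 u v h rfl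
    · intro k hk
      simp only [Finset.mem_range] at hk
      obtain ⟨v, hv⟩ := exists_level hsub1 hV hk
      refine ⟨v, ?_, hv⟩
      simp only [Finset.mem_filter, Finset.mem_univ, true_and]
      omega
  simpa using h

end Levels

end Setup

/-- If `Γ` is a tree (`T = Γ`) with at least two vertices, then `UD^nΓ` has exactly one
critical 0-cell, namely the set of the `n` vertices at distance `0, 1, …, n-1` from the
root. -/
theorem stmt8 {V : Type} [Fintype V] [DecidableEq V] (S : Setup V) (n : ℕ) (hn : 1 ≤ n) (hsub : S.SuffSubdiv n)
    (hGT : S.G = S.T) (hV : 2 ≤ Fintype.card V) :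
    ∀ c₀ : Finset (Sym2 V),
      c₀ = (Finset.univ.filter (fun v : V => S.T.dist S.root v < n)).image Sym2.diag →
      (S.IsCell n c₀ ∧ Setup.dim c₀ = 0 ∧ S.Critical n c₀ ∧
        ∀ c : Finset (Sym2 V), S.IsCell n c → Setup.dim c = 0 → S.Critical n c → c = c₀) := by
  intro c₀ hc₀
  unfold Setup.SuffSubdiv at hsub
  rw [hGT] at hsub
  have hsub1 := hsub.1
  have hcard : (Finset.univ.filter (fun v : V => S.T.dist S.root v < n)).card = n :=
    Setup.card_ball hsub1 hV
  have hmem : ∀ v : V, Sym2.diag v ∈ c₀ ↔ S.T.dist S.root v < n := by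
    intro v
    rw [hc₀]
    simp only [Finset.mem_image, Finset.mem_filter, Finset.mem_univ, true_and]
    constructor
    · rintro ⟨w, hw, heq⟩; rwa [← Sym2.diag_injective heq]
    · intro h; exact ⟨v, h, rfl⟩
  have hdiag : ∀ s ∈ c₀, s.IsDiag := by
    intro s hs
    rw [hc₀] at hs
    obtain ⟨v, -, rfl⟩ := Finset.mem_image.1 hs
    exact Sym2.diag_isDiag v
  have hcell : S.IsCell n c₀ := by
    refine ⟨?_, fun s hs => Or.inl (hdiag s hs), ?_⟩
    · rw [hc₀, Finset.card_image_of_injective _ Sym2.diag_injective, hcard]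
    · intro s hs t ht hst x hxs hxt
      rw [hc₀] at hs ht
      obtain ⟨a, -, rfl⟩ := Finset.mem_image.1 hs
      obtain ⟨b, -, rfl⟩ := Finset.mem_image.1 ht
      have hx1 : x = a := by simpa [Sym2.diag] using hxs
      have hx2 : x = b := by simpa [Sym2.diag] using hxt
      exact hst (by rw [← hx1, ← hx2])
  have hdim : Setup.dim c₀ = 0 := by
    simp only [Setup.dim, Finset.card_eq_zero, Finset.filter_eq_empty_iff]
    intro s hs
    simpa using hdiag s hs
  have hnoub : ∀ v : V, ¬ S.Unblocked c₀ v := by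
    rintro v ⟨hvmem, hnb⟩
    apply hnb
    by_cases hv : v = S.root
    · exact Or.inl hv
    · have hps := S.par_spec hv
      refine Or.inr ⟨Sym2.diag (S.par v), ?_, ?_, S.par v, ?_, ?_⟩
      · rw [hmem]
        have h1 := (hmem v).1 hvmem
        omega
      · intro h
        exact hps.1.ne (Sym2.diag_injective h).symm
      · exact Sym2.mem_iff.2 (Or.inr rfl)
      · exact Sym2.mem_iff.2 (Or.inl rfl)
  have hnred : ¬ S.Redundant n c₀ := by
    intro h
    unfold Setup.Redundant at h
    rw [hdim] at h
    simp only [Setup.RedundantAux] at h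
    obtain ⟨v, hv⟩ := h
    exact hnoub v hv
  have hncol : ¬ S.Collapsible n c₀ := by
    intro h
    unfold Setup.Collapsible Setup.PrincipalRedOf at h
    obtain ⟨c₁, -, -, v, hub, -, heq⟩ := h
    have hv0 : v ≠ S.root := fun h' => hub.2 (Or.inl h')
    have hev : S.eV v ∈ c₀ := by
      rw [heq]
      exact Finset.mem_insert_self _ _
    have hd := hdiag _ hev
    unfold Setup.eV at hd
    exact (S.par_spec hv0).1.ne (Sym2.mk_isDiag_iff.1 hd)
  refine ⟨hcell, hdim, ⟨hnred, hncol⟩, ?_⟩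
  -- uniqueness
  intro c hc hdimc hcrit
  unfold Setup.IsCell at hc
  obtain ⟨hccard, -, -⟩ := hc
  have hcd : ∀ s ∈ c, s.IsDiag := by
    intro s hs
    by_contra hnd
    have hmem' : s ∈ c.filter (fun s => ¬ s.IsDiag) := Finset.mem_filter.2 ⟨hs, hnd⟩
    unfold Setup.dim at hdimc
    rw [Finset.card_eq_zero] at hdimc
    rw [hdimc] at hmem'
    exact absurd hmem' (Finset.notMem_empty s)
  have hdiag_ex : ∀ s ∈ c, ∃ a : V, s = Sym2.diag a := by
    intro s hs
    induction s with
    | _ x y =>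
      have := hcd _ hs
      rw [Sym2.mk_isDiag_iff] at this
      exact ⟨x, by rw [Sym2.diag, this]⟩
  set A := Finset.univ.filter (fun v : V => Sym2.diag v ∈ c) with hA
  have hcA : c = A.image Sym2.diag := by
    apply Finset.Subset.antisymm
    · intro s hs
      obtain ⟨a, rfl⟩ := hdiag_ex s hs
      exact Finset.mem_image.2 ⟨a, Finset.mem_filter.2 ⟨Finset.mem_univ _, hs⟩, rfl⟩
    · intro s hs
      obtain ⟨a, ha, rfl⟩ := Finset.mem_image.1 hs
      exact (Finset.mem_filter.1 ha).2
  have hAcard : A.card = n := by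
    rw [← hccard, hcA, Finset.card_image_of_injective _ Sym2.diag_injective]
  have hblocked : ∀ v : V, Sym2.diag v ∈ c → S.Blocked c v := by
    intro v hv
    by_contra hnb
    refine hcrit.1 ?_
    unfold Setup.Redundant
    rw [hdimc]
    simp only [Setup.RedundantAux]
    exact ⟨v, hv, hnb⟩
  have hpar_mem : ∀ v : V, Sym2.diag v ∈ c → v ≠ S.root → Sym2.diag (S.par v) ∈ c := by
    intro v hv hv0
    rcases hblocked v hv with h | ⟨s, hs, hsne, x, hx1, hx2⟩
    · exact absurd h hv0
    · obtain ⟨w, rfl⟩ := hdiag_ex s hs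
      have hxw : x = w := by simpa [Sym2.diag] using hx2
      have hpe : S.eV v = s(v, S.par v) := rfl
      rw [hpe, Sym2.mem_iff] at hx1
      rcases hx1 with h | h
      · exact absurd (by rw [← hxw, h]) hsne
      · rw [← h, hxw]
        exact hs
  have key : ∀ d : ℕ, ∀ v : V, S.T.dist S.root v = d → Sym2.diag v ∈ c →
      ∀ x ∈ (S.geod S.root v).support, Sym2.diag x ∈ c := by
    intro d
    induction d using Nat.strong_induction_on with
    | _ d ih =>
      intro v hdv hv x hx
      by_cases hv0 : v = S.root
      · subst hv0
        have hnil : (S.geod S.root S.root) = SimpleGraph.Walk.nil :=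
          (SimpleGraph.Walk.isPath_iff_eq_nil).1 (S.geod_isPath _ _)
        rw [hnil] at hx
        simp only [SimpleGraph.Walk.support_nil, List.mem_singleton] at hx
        rw [hx]
        exact hv
      · rw [S.geod_concat hv0, SimpleGraph.Walk.support_concat] at hx
        rcases List.mem_append.1 hx with h | h
        rotate_left
        · simp only [List.mem_singleton] at h
          rw [h]
          exact hv
        · have hdp := (S.par_spec hv0).2
          exact ih (S.T.dist S.root (S.par v)) (by omega) (S.par v) rfl
            (hpar_mem v hv hv0) x h
  have hAball : A ⊆ Finset.univ.filter (fun v : V => S.T.dist S.root v < n) := by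
    intro v hvA
    have hv : Sym2.diag v ∈ c := (Finset.mem_filter.1 hvA).2
    have hlen : (S.geod S.root v).length = S.T.dist S.root v := S.geod_length _ _
    have hcardle : S.T.dist S.root v + 1 ≤ A.card := by
      have hmaps : ∀ i ∈ Finset.range (S.T.dist S.root v + 1),
          (S.geod S.root v).getVert i ∈ A := by
        intro i hi
        simp only [Finset.mem_range] at hi
        have hsup : (S.geod S.root v).getVert i ∈ (S.geod S.root v).support :=
          SimpleGraph.Walk.mem_support_iff_exists_getVert.2 ⟨i, rfl, by omega⟩
        exact Finset.mem_filter.2 ⟨Finset.mem_univ _, key _ v rfl hv _ hsup⟩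
      have hinj : Set.InjOn (fun i => (S.geod S.root v).getVert i)
          (Finset.range (S.T.dist S.root v + 1)) := by
        intro i hi j hj hij
        simp only [Finset.coe_range, Set.mem_Iio] at hi hj
        have h1 := (S.dist_getVert (S.geod S.root v) hlen i (by omega)).1
        have h2 := (S.dist_getVert (S.geod S.root v) hlen j (by omega)).1
        rw [← h1, ← h2]
        simp only at hij
        rw [hij]
      have := Finset.card_le_card_of_injOn _ hmaps hinj
      simpa using this
    rw [hAcard] at hcardle
    simp only [Finset.mem_filter, Finset.mem_univ, true_and]
    omega
  have hAB : A = Finset.univ.filter (fun v : V => S.T.dist S.root v < n) :=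
    Finset.eq_of_subset_of_card_le hAball (by rw [hcard, hAcard])
  rw [hcA, hAB, ← hc₀]

end GraphBraid
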